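/- There exists an absolute constant C > 0 such that for every r with 1/2 ≤ r < 1, ∫_Γ u1 · Q*_r(u1,u2) du1 du2 ≤ C · (1−r) · |log(1−r)|. -/

import Mathlib

/-!
Write `ε = 1 - r`. Since `1 - cos x ≥ x² / (2π²)` on `[0, 4π/3]` and `2r ≥ 1`, the Poisson kernel
satisfies `p_r(x) ≤ 9ε / (ε² + b²)` whenever `2πb ≤ 3x`. On `Γ` the arguments `π(u₁ ± u₂)` are
comparable to `u₁` and `2πu₂` to `u₂ ≤ u₁`, so `u₁ Q*_r(u)` is dominated by the product
`243 ε u₁ / (ε² + u₁²) · ε / (ε² + u₂²)`. Enlarging `Γ` to the unit square and integrating the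
factors separately gives `243 ε · (log ((1 + ε²) / ε²) / 2) · arctan (1 / ε) ≤ 729 ε |log ε|`.
-/

open MeasureTheory Finset

/-- The triangle `Γ = {(u₁,u₂) : 0 ≤ u₂ ≤ u₁/3, 0 ≤ u₁ ≤ 1}`. -/
def GammaT : Set (ℝ × ℝ) := {u | 0 ≤ u.2 ∧ u.2 ≤ u.1 / 3 ∧ 0 ≤ u.1 ∧ u.1 ≤ 1}

/-- The classical Poisson kernel `p_r(x) = (1−r²)/(1 − 2r·cos x + r²)`. -/
noncomputable def prP (r x : ℝ) : ℝ := (1 - r ^ 2) / (1 - 2 * r * Real.cos x + r ^ 2)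

/-- The function `Q*_r`. -/
noncomputable def QstarR (r : ℝ) (u : ℝ × ℝ) : ℝ :=
  prP r (Real.pi * (u.1 + u.2)) * prP r (2 * Real.pi * u.2) +
    prP r (Real.pi * (u.1 - u.2)) * prP r (Real.pi * (u.1 + u.2)) +
    prP r (Real.pi * (u.1 - u.2)) * prP r (2 * Real.pi * u.2)

open Real Set

lemma sq_div_two_mul_pi_sq_le_one_sub_cos {x : ℝ} (h0 : 0 ≤ x) (h1 : x ≤ 4 * π / 3) :
    x ^ 2 / (2 * π ^ 2) ≤ 1 - cos x := by
  rw [div_le_iff₀ (by positivity)]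
  rcases le_or_gt x π with hx | hx
  · have hcos := cos_le_one_sub_mul_cos_sq (x := x) (by rwa [abs_of_nonneg h0])
    have hπ : 2 / π ^ 2 * x ^ 2 * π ^ 2 = 2 * x ^ 2 := by field_simp
    nlinarith [pow_pos pi_pos 2, sq_nonneg x]
  · have hcos : cos x ≤ 0 := cos_nonpos_of_pi_div_two_le_of_le (by linarith) (by linarith)
    nlinarith [pi_pos]

section PoissonKernel

variable {r : ℝ}

lemma prP_denom_pos (hr0 : 0 ≤ r) (hr1 : r < 1) (x : ℝ) :
    0 < 1 - 2 * r * cos x + r ^ 2 := by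
  nlinarith [cos_le_one x, sq_nonneg (1 - r)]

lemma prP_nonneg (hr0 : 0 ≤ r) (hr1 : r < 1) (x : ℝ) : 0 ≤ prP r x :=
  div_nonneg (by nlinarith) (prP_denom_pos hr0 hr1 x).le

lemma continuous_prP (hr0 : 0 ≤ r) (hr1 : r < 1) : Continuous (prP r) :=
  continuous_const.div (by fun_prop) fun x => (prP_denom_pos hr0 hr1 x).ne'

/-- The denominator is `(1 - r)² + 2r(1 - cos x)`, and `2r ≥ 1`. -/
lemma prP_le (hr : 1 / 2 ≤ r) (hr1 : r < 1) {x : ℝ} (hx0 : 0 ≤ x) (hx1 : x ≤ 4 * π / 3) :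
    prP r x ≤ 2 * (1 - r) / ((1 - r) ^ 2 + x ^ 2 / (2 * π ^ 2)) := by
  have hcos := sq_div_two_mul_pi_sq_le_one_sub_cos hx0 hx1
  have hε : 0 < 1 - r := by linarith
  refine div_le_div₀ (by linarith) (by nlinarith) (by positivity) ?_
  nlinarith [cos_le_one x]

lemma prP_le_of_two_mul_pi_mul_le (hr : 1 / 2 ≤ r) (hr1 : r < 1) {x b : ℝ} (hx1 : x ≤ 4 * π / 3)
    (hb : 0 ≤ b) (hbx : 2 * π * b ≤ 3 * x) :
    prP r x ≤ 9 * (1 - r) / ((1 - r) ^ 2 + b ^ 2) := by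
  have hε : 0 < 1 - r := by linarith
  have hx0 : 0 ≤ x := by nlinarith [pi_pos]
  have hb2 : 2 / 9 * b ^ 2 ≤ x ^ 2 / (2 * π ^ 2) := by
    rw [le_div_iff₀ (by positivity)]
    nlinarith [pow_le_pow_left₀ (by positivity) hbx 2]
  calc prP r x ≤ 2 * (1 - r) / ((1 - r) ^ 2 + x ^ 2 / (2 * π ^ 2)) := prP_le hr hr1 hx0 hx1
    _ ≤ 2 * (1 - r) / ((1 - r) ^ 2 + 2 / 9 * b ^ 2) := by gcongr
    _ ≤ 9 * (1 - r) / ((1 - r) ^ 2 + b ^ 2) := by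
      rw [div_le_div_iff₀ (by positivity) (by positivity)]
      nlinarith [sq_nonneg b]

end PoissonKernel

lemma GammaT_subset_Icc_prod : GammaT ⊆ Icc (0 : ℝ) 1 ×ˢ Icc (0 : ℝ) 1 :=
  fun _ ⟨h1, h2, h3, h4⟩ => ⟨⟨h3, h4⟩, ⟨h1, by linarith⟩⟩

lemma isCompact_GammaT : IsCompact GammaT := by
  refine (isCompact_Icc.prod isCompact_Icc).of_isClosed_subset ?_ GammaT_subset_Icc_prod
  simp only [GammaT, ofPred_and]
  exact (isClosed_le continuous_const continuous_snd).inter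
    ((isClosed_le continuous_snd (continuous_fst.div_const 3)).inter
      ((isClosed_le continuous_const continuous_fst).inter
        (isClosed_le continuous_fst continuous_const)))

lemma continuous_QstarR {r : ℝ} (hr0 : 0 ≤ r) (hr1 : r < 1) : Continuous (QstarR r) := by
  have := continuous_prP hr0 hr1
  unfold QstarR
  fun_prop

lemma mul_QstarR_le {r : ℝ} (hr : 1 / 2 ≤ r) (hr1 : r < 1) {u : ℝ × ℝ} (hu : u ∈ GammaT) :
    u.1 * QstarR r u ≤
      243 * (1 - r) * (u.1 / ((1 - r) ^ 2 + u.1 ^ 2)) * ((1 - r) / ((1 - r) ^ 2 + u.2 ^ 2)) := by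
  obtain ⟨hu2, hu21, hu1, hu11⟩ := hu
  have hπ := pi_pos
  have hε : 0 < 1 - r := by linarith
  have hab : 9 * (1 - r) / ((1 - r) ^ 2 + u.1 ^ 2) ≤ 9 * (1 - r) / ((1 - r) ^ 2 + u.2 ^ 2) := by
    gcongr; linarith
  set a := 9 * (1 - r) / ((1 - r) ^ 2 + u.1 ^ 2)
  set b := 9 * (1 - r) / ((1 - r) ^ 2 + u.2 ^ 2)
  have ha : 0 ≤ a := by positivity
  have hplus : prP r (π * (u.1 + u.2)) ≤ a :=
    prP_le_of_two_mul_pi_mul_le hr hr1 (by nlinarith) hu1 (by nlinarith)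
  have hminus : prP r (π * (u.1 - u.2)) ≤ a :=
    prP_le_of_two_mul_pi_mul_le hr hr1 (by nlinarith) hu1 (by nlinarith)
  have hdouble : prP r (2 * π * u.2) ≤ b :=
    prP_le_of_two_mul_pi_mul_le hr hr1 (by nlinarith) hu2 (by nlinarith)
  have hp := prP_nonneg (by linarith) hr1
  have hQ : QstarR r u ≤ 3 * (a * b) := by
    have h₁ := mul_le_mul hplus hdouble (hp _) ha
    have h₂ := mul_le_mul hminus (hplus.trans hab) (hp _) ha
    have h₃ := mul_le_mul hminus hdouble (hp _) ha
    unfold QstarR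
    linarith
  calc u.1 * QstarR r u ≤ u.1 * (3 * (a * b)) := mul_le_mul_of_nonneg_left hQ hu1
    _ = _ := by ring

lemma setIntegral_le_integral_mul_integral_of_subset_prod {α β : Type*} [MeasurableSpace α]
    [MeasurableSpace β] {μ : Measure α} {ν : Measure β} [SFinite μ] [SFinite ν]
    {s : Set (α × β)} {A : Set α} {B : Set β} {f : α × β → ℝ} {F : α → ℝ} {G : β → ℝ}
    (hs : MeasurableSet s) (hA : MeasurableSet A) (hB : MeasurableSet B) (hsub : s ⊆ A ×ˢ B)
    (hf : IntegrableOn f s (μ.prod ν)) (hF : IntegrableOn F A μ) (hG : IntegrableOn G B ν)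
    (hF0 : ∀ x ∈ A, 0 ≤ F x) (hG0 : ∀ y ∈ B, 0 ≤ G y) (hle : ∀ u ∈ s, f u ≤ F u.1 * G u.2) :
    ∫ u in s, f u ∂μ.prod ν ≤ (∫ x in A, F x ∂μ) * ∫ y in B, G y ∂ν := by
  have hFG : IntegrableOn (fun u : α × β => F u.1 * G u.2) (A ×ˢ B) (μ.prod ν) := by
    rw [IntegrableOn, ← Measure.prod_restrict]
    exact hF.mul_prod hG
  calc ∫ u in s, f u ∂μ.prod ν ≤ ∫ u in s, F u.1 * G u.2 ∂μ.prod ν :=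
        setIntegral_mono_on hf (hFG.mono_set hsub) hs hle
    _ ≤ ∫ u in A ×ˢ B, F u.1 * G u.2 ∂μ.prod ν :=
        setIntegral_mono_set hFG
          ((ae_restrict_iff' (hA.prod hB)).2 (ae_of_all _ fun u hu =>
            mul_nonneg (hF0 _ hu.1) (hG0 _ hu.2)))
          hsub.eventuallyLE
    _ = (∫ x in A, F x ∂μ) * ∫ y in B, G y ∂ν := setIntegral_prod_mul F G A B

lemma integral_self_div_sq_add_sq {ε : ℝ} (hε : 0 < ε) (a b : ℝ) :
    ∫ x in a..b, x / (ε ^ 2 + x ^ 2) = log (ε ^ 2 + b ^ 2) / 2 - log (ε ^ 2 + a ^ 2) / 2 := by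
  have hcont : Continuous fun x : ℝ => x / (ε ^ 2 + x ^ 2) :=
    continuous_id.div (by fun_prop) fun x => by positivity
  refine intervalIntegral.integral_eq_sub_of_hasDerivAt (f := fun x => log (ε ^ 2 + x ^ 2) / 2)
    (fun x _ => ?_) (hcont.intervalIntegrable _ _)
  have h := (((hasDerivAt_pow 2 x).const_add (ε ^ 2)).log (by positivity)).div_const 2
  exact h.congr_deriv (by push_cast; ring)

lemma integral_Icc_self_div_sq_add_sq_le {ε : ℝ} (hε : 0 < ε) (hε2 : ε ≤ 1 / 2) :
    ∫ x in Icc (0 : ℝ) 1, x / (ε ^ 2 + x ^ 2) ≤ 3 / 2 * |log ε| := by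
  rw [integral_Icc_eq_integral_Ioc, ← intervalIntegral.integral_of_le zero_le_one,
    integral_self_div_sq_add_sq hε, abs_of_neg (log_neg hε (by linarith))]
  have hlog2 : log (ε ^ 2 + 1 ^ 2) ≤ log 2 := log_le_log (by positivity) (by nlinarith)
  have hlogε : log 2 ≤ -log ε := by
    rw [← log_inv]; exact log_le_log (by norm_num) (by rw [le_inv_comm₀] <;> linarith)
  have hsq : log (ε ^ 2 + 0 ^ 2) = 2 * log ε := by simp [log_pow]
  norm_num at hlog2 hsq ⊢
  linarith

lemma integral_Icc_div_sq_add_sq_le (ε : ℝ) :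
    ∫ y in Icc (0 : ℝ) 1, ε / (ε ^ 2 + y ^ 2) ≤ 2 := by
  rw [integral_Icc_eq_integral_Ioc, ← intervalIntegral.integral_of_le zero_le_one,
    integral_div_sq_add_sq, zero_div, arctan_zero, sub_zero]
  linarith [arctan_lt_pi_div_two (1 / ε), pi_le_four]

theorem stmt_19 :
    ∃ C : ℝ, 0 < C ∧
      ∀ r : ℝ, 1 / 2 ≤ r → r < 1 →
        ∫ u in GammaT, u.1 * QstarR r u ≤ C * (1 - r) * |Real.log (1 - r)| := by
  refine ⟨729, by norm_num, fun r hr hr1 => ?_⟩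
  have hε : 0 < 1 - r := by linarith
  have hF : Continuous fun x : ℝ => 243 * (1 - r) * (x / ((1 - r) ^ 2 + x ^ 2)) :=
    continuous_const.mul (continuous_id.div (by fun_prop) fun x => by positivity)
  have hG : Continuous fun y : ℝ => (1 - r) / ((1 - r) ^ 2 + y ^ 2) :=
    continuous_const.div (by fun_prop) fun y => by positivity
  have hbound := setIntegral_le_integral_mul_integral_of_subset_prod (μ := volume) (ν := volume)
    isCompact_GammaT.isClosed.measurableSet measurableSet_Icc measurableSet_Icc
    GammaT_subset_Icc_prod
    ((continuous_fst.mul (continuous_QstarR (by linarith) hr1)).continuousOn.integrableOn_compact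
      isCompact_GammaT)
    hF.integrableOn_Icc hG.integrableOn_Icc
    (fun x hx => by have := hx.1; positivity) (fun y _ => by positivity)
    (fun u hu => mul_QstarR_le hr hr1 hu)
  rw [← Measure.volume_eq_prod, integral_const_mul] at hbound
  have hFint := integral_Icc_self_div_sq_add_sq_le hε (by linarith)
  have hGint := integral_Icc_div_sq_add_sq_le (1 - r)
  have hF0 : 0 ≤ ∫ x in Icc (0 : ℝ) 1, x / ((1 - r) ^ 2 + x ^ 2) :=
    setIntegral_nonneg measurableSet_Icc fun x hx => by have := hx.1; positivity
  calc _ ≤ _ := hbound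
    _ ≤ 243 * (1 - r) * (3 / 2 * |log (1 - r)|) * 2 := by gcongr
    _ = 729 * (1 - r) * |log (1 - r)| := by ring
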